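/- Let L be a join-semilattice. Then X_L, equipped with the map l ↦ Supp(l) and the topology whose closed sets are generated by {Supp(l) | l ∈ L}, is a support datum of L. In particular: Supp(l ⊔ l') = Supp(l) ∪ Supp(l') for all l, l' ∈ L; the induced map Ind(L) → 2^{X_L}, S ↦ ∪_{l∈S} Supp(l), is injective; and X_L is a T0 space, where for P, Q ∈ X_L one has Q ∈ closure({P}) if and only if Q ⊆ P. -/

import Mathlib

/-- An ind-object of a join-semilattice `L`: a nonempty, downward closed subset of `L`
closed under joins of two elements. -/
def IsIndObject {L : Type*} [SemilatticeSup L] (S : Set L) : Prop :=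
  S.Nonempty ∧ (∀ ⦃l s : L⦄, l ≤ s → s ∈ S → l ∈ S) ∧ ∀ ⦃a b : L⦄, a ∈ S → b ∈ S → a ⊔ b ∈ S

/-- `Ind(L)`, the set of ind-objects of `L`, partially ordered by inclusion. -/
abbrev IndObj (L : Type*) [SemilatticeSup L] := {S : Set L // IsIndObject S}

/-- The intersection of all ind-objects strictly containing `P`. -/
def indInterAbove {L : Type*} [SemilatticeSup L] (P : IndObj L) : Set L :=
  ⋂ (Q : IndObj L) (_ : P.1 ⊂ Q.1), Q.1

/-- `X_L`: the set of `P ∈ Ind(L)` such that the intersection of all ind-objects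
strictly containing `P` strictly contains `P`. -/
abbrev XL (L : Type*) [SemilatticeSup L] := {P : IndObj L // P.1 ⊂ indInterAbove P}

/-- `Supp(l) = {P ∈ X_L | l ∉ P}` for `l ∈ L`. -/
def ptSupp {L : Type*} [SemilatticeSup L] (l : L) : Set (XL L) :=
  {P : XL L | l ∉ P.1.1}

/-- The topology on `X_L` whose closed sets are generated by `{Supp(l) | l ∈ L}`. -/
instance XL.topologicalSpace (L : Type*) [SemilatticeSup L] : TopologicalSpace (XL L) :=
  .generateFrom {U : Set (XL L) | ∃ l : L, U = (ptSupp l)ᶜ}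

/-!
Points of `X_L` separate elements from ind-objects: if `l ∉ S`, Zorn's lemma gives an
ind-object `M ⊇ S` maximal among those avoiding `l`, and every ind-object strictly above `M`
contains `l`, so `M ∈ X_L`. This gives injectivity of `S ↦ ⋃_{l ∈ S} Supp(l)`. Since the
generating open sets are `{P | l ∈ P}`, the specialization order of `X_L` is reverse inclusion,
which yields the description of closures of points and the T0 property.
-/

open Set TopologicalSpace

theorem TopologicalSpace.specializes_generateFrom_iff {α : Type*} {g : Set (Set α)} {x y : α} :
    @Specializes α (generateFrom g) x y ↔ ∀ s ∈ g, y ∈ s → x ∈ s := by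
  let := generateFrom g
  refine ⟨fun h s hs hy => h.mem_open (isOpen_generateFrom_of_mem hs) hy, fun h => ?_⟩
  simp_rw [Specializes, nhds_generateFrom, le_iInf₂_iff]
  rintro s ⟨hy, hs⟩
  exact iInf₂_le s ⟨h s hs hy, hs⟩

namespace IsIndObject

variable {L : Type*} [SemilatticeSup L] {S : Set L}

theorem sup_mem_iff (hS : IsIndObject S) {a b : L} : a ⊔ b ∈ S ↔ a ∈ S ∧ b ∈ S :=
  ⟨fun h => ⟨hS.2.1 le_sup_left h, hS.2.1 le_sup_right h⟩, fun h => hS.2.2 h.1 h.2⟩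

theorem sUnion_of_isChain {c : Set (Set L)} (hc : ∀ A ∈ c, IsIndObject A)
    (hchain : IsChain (· ⊆ ·) c) (hne : c.Nonempty) : IsIndObject (⋃₀ c) := by
  obtain ⟨A₀, hA₀⟩ := hne
  refine ⟨(hc A₀ hA₀).1.mono (subset_sUnion_of_mem hA₀), ?_, ?_⟩
  · rintro a s hle ⟨A, hA, hsA⟩
    exact ⟨A, hA, (hc A hA).2.1 hle hsA⟩
  · rintro a b ⟨A, hA, haA⟩ ⟨B, hB, hbB⟩
    rcases hchain.total hA hB with hAB | hBA
    · exact ⟨B, hB, (hc B hB).2.2 (hAB haA) hbB⟩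
    · exact ⟨A, hA, (hc A hA).2.2 haA (hBA hbB)⟩

theorem exists_maximal_not_mem (hS : IsIndObject S) {l : L} (hl : l ∉ S) :
    ∃ M, S ⊆ M ∧ Maximal (fun A => IsIndObject A ∧ l ∉ A) M := by
  refine zorn_subset_nonempty _ (fun c hcS hchain hne => ?_) S ⟨hS, hl⟩
  refine ⟨⋃₀ c, ⟨sUnion_of_isChain (fun A hA => (hcS hA).1) hchain hne, ?_⟩,
    fun A hA => subset_sUnion_of_mem hA⟩
  rintro ⟨A, hA, hlA⟩
  exact (hcS hA).2 hlA

end IsIndObject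

section XL

variable {L : Type*} [SemilatticeSup L]

@[simp]
theorem mem_ptSupp {l : L} {P : XL L} : P ∈ ptSupp l ↔ l ∉ P.1.1 := Iff.rfl

theorem ptSupp_sup (l l' : L) : ptSupp (l ⊔ l') = ptSupp l ∪ ptSupp l' := by
  ext P
  simp only [mem_union, mem_ptSupp, P.1.2.sup_mem_iff, not_and_or]

theorem subset_indInterAbove (P : IndObj L) : P.1 ⊆ indInterAbove P :=
  fun _ hx => mem_iInter₂.mpr fun _ hQ => hQ.1 hx

theorem ssubset_indInterAbove_of_maximal {M : IndObj L} {l : L}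
    (hM : Maximal (fun A => IsIndObject A ∧ l ∉ A) M.1) : M.1 ⊂ indInterAbove M := by
  have hl : l ∈ indInterAbove M := mem_iInter₂.mpr fun Q hMQ => by
    by_contra hlQ
    exact hMQ.2 (hM.le_of_ge ⟨Q.2, hlQ⟩ hMQ.1)
  exact ssubset_of_subset_of_ne (subset_indInterAbove M) fun h => hM.prop.2 (h ▸ hl)

theorem exists_XL_superset_not_mem (S : IndObj L) {l : L} (hl : l ∉ S.1) :
    ∃ P : XL L, S.1 ⊆ P.1.1 ∧ l ∉ P.1.1 := by
  obtain ⟨M, hSM, hM⟩ := S.2.exists_maximal_not_mem hl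
  exact ⟨⟨⟨M, hM.prop.1⟩, ssubset_indInterAbove_of_maximal hM⟩, hSM, hM.prop.2⟩

theorem biUnion_ptSupp_subset_iff {S T : IndObj L} :
    (⋃ l ∈ S.1, ptSupp l) ⊆ (⋃ l ∈ T.1, ptSupp l) ↔ S.1 ⊆ T.1 := by
  refine ⟨fun h l hlS => ?_, fun h => biUnion_subset_biUnion_left h⟩
  by_contra hlT
  obtain ⟨P, hTP, hlP⟩ := exists_XL_superset_not_mem T hlT
  obtain ⟨m, hmT, hmP⟩ := mem_iUnion₂.mp (h (mem_biUnion hlS hlP))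
  exact hmP (hTP hmT)

theorem injective_biUnion_ptSupp : Function.Injective (fun S : IndObj L => ⋃ l ∈ S.1, ptSupp l) :=
  fun _ _ h => Subtype.ext <|
    (biUnion_ptSupp_subset_iff.mp h.le).antisymm (biUnion_ptSupp_subset_iff.mp h.ge)

theorem XL.specializes_iff {P Q : XL L} : P ⤳ Q ↔ Q.1.1 ⊆ P.1.1 := by
  rw [XL.topologicalSpace, specializes_generateFrom_iff]
  simp only [mem_ofPred_eq, forall_exists_index, forall_eq_apply_imp_iff, mem_compl_iff,
    mem_ptSupp, not_not]
  rfl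

theorem XL.mem_closure_singleton_iff {P Q : XL L} : Q ∈ closure {P} ↔ Q.1.1 ⊆ P.1.1 :=
  specializes_iff_mem_closure.symm.trans XL.specializes_iff

instance XL.t0Space : T0Space (XL L) :=
  (t0Space_iff_inseparable _).mpr fun _ _ h => Subtype.ext <| Subtype.ext <|
    (XL.specializes_iff.mp h.specializes').antisymm (XL.specializes_iff.mp h.specializes)

end XL

/-- `X_L`, with `l ↦ Supp(l)` and the topology whose closed sets are generated by the
`Supp(l)`, is a support datum of `L`: `Supp(l ⊔ l') = Supp(l) ∪ Supp(l')`, the induced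
map `Ind(L) → 2^{X_L}`, `S ↦ ⋃_{l ∈ S} Supp(l)`, is injective, and `X_L` is a T0 space,
where `Q ∈ closure {P}` iff `Q ⊆ P`. -/
theorem stmt_4 (L : Type*) [SemilatticeSup L] :
    (∀ l l' : L, ptSupp (l ⊔ l') = ptSupp l ∪ ptSupp l') ∧
    Function.Injective (fun S : IndObj L => ⋃ l ∈ S.1, ptSupp l) ∧
    T0Space (XL L) ∧
    (∀ P Q : XL L, Q ∈ closure {P} ↔ Q.1.1 ⊆ P.1.1) :=
  ⟨ptSupp_sup, injective_biUnion_ptSupp, inferInstance, fun _ _ => XL.mem_closure_singleton_iff⟩
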